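/- arXiv:2307.04070 — 7 statements merged into one kernel-verified Lean document; each statement's English description precedes it below -/
import Mathlib

section
/- Suppose μ is a probability measure on a product measurable space T = ∏_{i∈N} T_i, and Q_i : T_i → [0,1] are measurable. If for each i, E_i ⊆ T_i is measurable and Q_i is constant equal to r_i on E_i, and the common-knowledge condition μ_i(E_i) = μ(E_1 × ⋯ × E_n) = μ(⋃_i (E_i × T_{-i})) holds for all i with μ(E) > 0, and Q satisfies the Border inequalities ∑_i ∫_{E_i} Q_i dμ_i ≤ μ(⋃_i (E_i × T_{-i})) for all measurable testing sets as well as the complementary inequality ∑_i ∫_{T_i∖E_i} Q_i dμ_i ≤ μ(⋃_i ((T_i∖E_i) × T_{-i})) and the equality ∑_i ∫_{T_i} Q_i dμ_i = 1, then ∑_{i∈N} r_i = 1. -/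
open MeasureTheory

/-- Theorem 2 (Aumann's agreement theorem, Border's version). -/
theorem stmt_1 {n : ℕ} (hn : 2 ≤ n) (T : Fin n → Type*)
    [∀ i, MeasurableSpace (T i)]
    (μ : Measure (∀ i, T i)) [IsProbabilityMeasure μ]
    (Q : ∀ i, T i → ℝ) (hQmeas : ∀ i, Measurable (Q i))
    (hQrange : ∀ i t, Q i t ∈ Set.Icc (0 : ℝ) 1)
    (E : ∀ i, Set (T i)) (hEmeas : ∀ i, MeasurableSet (E i))
    (r : Fin n → ℝ) (hconst : ∀ i, ∀ t ∈ E i, Q i t = r i)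
    -- common knowledge of the event E = E_1 × ⋯ × E_n :
    (hpos : 0 < μ {t | ∀ i, t i ∈ E i})
    (hck : ∀ i, (μ.map (fun t => t i)) (E i) = μ {t | ∀ i, t i ∈ E i} ∧
      μ {t | ∀ i, t i ∈ E i} = μ {t | ∃ i, t i ∈ E i})
    -- Border inequality for the testing sets (E_i) :
    (hBorder : ∑ i, ∫ t in E i, Q i t ∂(μ.map (fun s => s i)) ≤
      (μ {t | ∃ i, t i ∈ E i}).toReal)
    -- Border inequality for the complementary testing sets (E_iᶜ) :
    (hBorder' : ∑ i, ∫ t in (E i)ᶜ, Q i t ∂(μ.map (fun s => s i)) ≤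
      (μ {t | ∃ i, t i ∈ (E i)ᶜ}).toReal)
    -- the martingale equality :
    (hEq : ∑ i, ∫ t, Q i t ∂(μ.map (fun s => s i)) = 1) :
    ∑ i, r i = 1 := by
  have hSmeas : MeasurableSet {t : ∀ i, T i | ∀ i, t i ∈ E i} := by
    have : {t : ∀ i, T i | ∀ i, t i ∈ E i} = ⋂ i, (fun t => t i) ⁻¹' E i := by
      ext t; simp
    rw [this]
    exact MeasurableSet.iInter fun i => (measurable_pi_apply i) (hEmeas i)
  set m : ℝ := (μ {t | ∀ i, t i ∈ E i}).toReal with hm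
  have hmne : μ {t | ∀ i, t i ∈ E i} ≠ ⊤ := measure_ne_top _ _
  have hmpos : 0 < m := ENNReal.toReal_pos hpos.ne' hmne
  have hcompl : {t : ∀ i, T i | ∃ i, t i ∈ (E i)ᶜ} = {t : ∀ i, T i | ∀ i, t i ∈ E i}ᶜ := by
    ext t; simp
  have hμcompl : (μ {t | ∃ i, t i ∈ (E i)ᶜ}).toReal = 1 - m := by
    rw [hcompl, prob_compl_eq_one_sub hSmeas, hm,
      ENNReal.toReal_sub_of_le prob_le_one (by simp), ENNReal.toReal_one]
  -- integrability
  have hprob : ∀ i : Fin n, IsProbabilityMeasure (μ.map (fun s => s i)) := fun i =>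
    Measure.isProbabilityMeasure_map (measurable_pi_apply i).aemeasurable
  have hint : ∀ i : Fin n, Integrable (Q i) (μ.map (fun s => s i)) := by
    intro i
    haveI := hprob i
    refine Integrable.mono' (integrable_const 1) (hQmeas i).aestronglyMeasurable ?_
    filter_upwards with t
    rw [Real.norm_eq_abs, abs_of_nonneg (hQrange i t).1]
    exact (hQrange i t).2
  -- value of the integral over E i
  have hEi : ∀ i : Fin n, ∫ t in E i, Q i t ∂(μ.map (fun s => s i)) = r i * m := by
    intro i
    have h1 : ∫ t in E i, Q i t ∂(μ.map (fun s => s i)) =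
        ∫ _ in E i, r i ∂(μ.map (fun s => s i)) :=
      setIntegral_congr_fun (hEmeas i) (fun t ht => hconst i t ht)
    rw [h1, setIntegral_const, measureReal_def, (hck i).1, smul_eq_mul, mul_comm]
  have hμE : (μ {t | ∃ i, t i ∈ E i}).toReal = m := by rw [← (hck ⟨0, by omega⟩).2]
  -- first inequality : (∑ r) * m ≤ m
  have h1 : (∑ i, r i) * m ≤ m := by
    have := hBorder
    rw [hμE] at this
    calc (∑ i, r i) * m = ∑ i, r i * m := by rw [Finset.sum_mul]
      _ = ∑ i, ∫ t in E i, Q i t ∂(μ.map (fun s => s i)) := by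
          exact Finset.sum_congr rfl fun i _ => (hEi i).symm
      _ ≤ m := this
  -- second inequality : m ≤ (∑ r) * m
  have h2 : m ≤ (∑ i, r i) * m := by
    have hsplit : ∀ i : Fin n, ∫ t in (E i)ᶜ, Q i t ∂(μ.map (fun s => s i)) =
        (∫ t, Q i t ∂(μ.map (fun s => s i))) - r i * m := by
      intro i
      have := integral_add_compl (hEmeas i) (hint i)
      rw [hEi i] at this
      linarith
    have : ∑ i, ((∫ t, Q i t ∂(μ.map (fun s => s i))) - r i * m) ≤ 1 - m := by
      rw [← hμcompl]
      calc ∑ i, ((∫ t, Q i t ∂(μ.map (fun s => s i))) - r i * m)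
          = ∑ i, ∫ t in (E i)ᶜ, Q i t ∂(μ.map (fun s => s i)) :=
            Finset.sum_congr rfl fun i _ => (hsplit i).symm
        _ ≤ _ := hBorder'
    rw [Finset.sum_sub_distrib, hEq, ← Finset.sum_mul] at this
    linarith
  have h3 : (∑ i, r i) * m = 1 * m := by rw [one_mul]; exact le_antisymm h1 h2
  exact mul_right_cancel₀ hmpos.ne' h3
end

section
/- Let ν be a probability measure on [0,1]^n. The Border inequality ∑_{i∈N} ∫_{C_i} x_i dν_i(x_i) ≤ ν(⋃_i (C_i × [0,1]^{n-1})) for all measurable C_i ⊆ [0,1] (together with ∑_i ∫ x_i dν_i = 1) is equivalent to the floor-constraint inequality ∑_{i∈N} ∫_{C_i} x_i dν_i(x_i) ≥ ν(C_1 × ⋯ × C_n) for all measurable C_i ⊆ [0,1] (together with ∑_i ∫ x_i dν_i = 1). -/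
/-!
Write `b(C) = ∑ᵢ ∫_{Cᵢ} x dνᵢ`. Since the means of the marginals sum to `1`, `b(C) + b(Cᶜ) = 1`,
and the union of the cylinders over the `Cᵢᶜ` is the complement of the box `C₁ × ⋯ × Cₙ`, so
`ν(⋃ᵢ Cᵢᶜ × [0,1]^{n-1}) = 1 - ν(C₁ × ⋯ × Cₙ)`. Hence the ceiling inequality for `Cᶜ` is the
floor inequality for `C`, and `C ↦ Cᶜ` is a bijection of families of measurable sets.
-/

open MeasureTheory

variable {ι : Type*}

noncomputable def marginalIntegralSum [Fintype ι] (ν : Measure (ι → ℝ)) (C : ι → Set ℝ) : ℝ :=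
  ∑ i, ∫ x in C i, x ∂(ν.map (fun y => y i))

lemma integrable_id_map_eval {ν : Measure (ι → ℝ)} [IsFiniteMeasure ν] {i : ι} {a b : ℝ}
    (h : ∀ᵐ y ∂ν, y i ∈ Set.Icc a b) :
    Integrable (fun x : ℝ => x) (ν.map (fun y => y i)) :=
  Integrable.of_mem_Icc a b aemeasurable_id <|
    (ae_map_iff (measurable_pi_apply i).aemeasurable measurableSet_Icc).2 h

lemma marginalIntegralSum_add_compl [Fintype ι] {ν : Measure (ι → ℝ)} {C : ι → Set ℝ}
    (hC : ∀ i, MeasurableSet (C i))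
    (hint : ∀ i, Integrable (fun x : ℝ => x) (ν.map (fun y => y i))) :
    marginalIntegralSum ν C + marginalIntegralSum ν (fun i => (C i)ᶜ) =
      ∑ i, ∫ x, x ∂(ν.map (fun y => y i)) := by
  rw [marginalIntegralSum, marginalIntegralSum, ← Finset.sum_add_distrib]
  exact Finset.sum_congr rfl fun i _ => integral_add_compl (hC i) (hint i)

lemma measureReal_exists_mem_compl [Fintype ι] {ν : Measure (ι → ℝ)} [IsProbabilityMeasure ν]
    {C : ι → Set ℝ} (hC : ∀ i, MeasurableSet (C i)) :
    ν.real {x | ∃ i, x i ∈ (C i)ᶜ} = 1 - ν.real {x | ∀ i, x i ∈ C i} := by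
  have hbox : {x : ι → ℝ | ∀ i, x i ∈ C i} = Set.univ.pi C := by ext; simp
  have hunion : {x : ι → ℝ | ∃ i, x i ∈ (C i)ᶜ} = (Set.univ.pi C)ᶜ := by ext; simp
  rw [hbox, hunion, probReal_compl_eq_one_sub (MeasurableSet.univ_pi hC)]

lemma marginalIntegralSum_compl_le_iff [Fintype ι] {ν : Measure (ι → ℝ)} [IsProbabilityMeasure ν]
    {C : ι → Set ℝ} (hC : ∀ i, MeasurableSet (C i))
    (hint : ∀ i, Integrable (fun x : ℝ => x) (ν.map (fun y => y i)))
    (hmean : ∑ i, ∫ x, x ∂(ν.map (fun y => y i)) = 1) :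
    marginalIntegralSum ν (fun i => (C i)ᶜ) ≤ ν.real {x | ∃ i, x i ∈ (C i)ᶜ} ↔
      ν.real {x | ∀ i, x i ∈ C i} ≤ marginalIntegralSum ν C := by
  have hsplit := marginalIntegralSum_add_compl hC hint
  rw [measureReal_exists_mem_compl hC]
  constructor <;> intro h <;> linarith

theorem stmt_2_general {n : ℕ}
    (ν : Measure (Fin n → ℝ)) [IsProbabilityMeasure ν]
    (hsupp : ν {x | ∀ i, x i ∈ Set.Icc (0 : ℝ) 1} = 1) :
    ((∀ C : Fin n → Set ℝ, (∀ i, MeasurableSet (C i)) →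
        ∑ i, ∫ x in C i, x ∂(ν.map (fun y => y i)) ≤
          (ν {x | ∃ i, x i ∈ C i}).toReal) ∧
      ∑ i, ∫ x, x ∂(ν.map (fun y => y i)) = 1)
    ↔
    ((∀ C : Fin n → Set ℝ, (∀ i, MeasurableSet (C i)) →
        (ν {x | ∀ i, x i ∈ C i}).toReal ≤
          ∑ i, ∫ x in C i, x ∂(ν.map (fun y => y i))) ∧
      ∑ i, ∫ x, x ∂(ν.map (fun y => y i)) = 1) := by
  have hcube : ∀ᵐ y ∂ν, ∀ i, y i ∈ Set.Icc (0 : ℝ) 1 :=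
    (ae_iff_prob_eq_one <| Measurable.forall fun i =>
      measurableSet_Icc.mem.comp (measurable_pi_apply i)).2 hsupp
  have hint : ∀ i, Integrable (fun x : ℝ => x) (ν.map (fun y => y i)) :=
    fun i => integrable_id_map_eval (hcube.mono fun y hy => hy i)
  constructor
  · rintro ⟨hceil, hmean⟩
    exact ⟨fun C hC => (marginalIntegralSum_compl_le_iff hC hint hmean).1
      (hceil _ fun i => (hC i).compl), hmean⟩
  · rintro ⟨hfloor, hmean⟩
    refine ⟨fun C hC => ?_, hmean⟩
    have h := (marginalIntegralSum_compl_le_iff (fun i => (hC i).compl) hint hmean).2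
      (hfloor _ fun i => (hC i).compl)
    simp only [compl_compl] at h
    exact h

/-- Equivalence of the ceiling (Border*) and floor forms of the Border inequalities
for a probability measure on `[0,1]^n`. -/
theorem stmt_2 {n : ℕ} (hn : 2 ≤ n)
    (ν : Measure (Fin n → ℝ)) [IsProbabilityMeasure ν]
    (hsupp : ν {x | ∀ i, x i ∈ Set.Icc (0 : ℝ) 1} = 1) :
    ((∀ C : Fin n → Set ℝ, (∀ i, MeasurableSet (C i)) →
        ∑ i, ∫ x in C i, x ∂(ν.map (fun y => y i)) ≤
          (ν {x | ∃ i, x i ∈ C i}).toReal) ∧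
      ∑ i, ∫ x, x ∂(ν.map (fun y => y i)) = 1)
    ↔
    ((∀ C : Fin n → Set ℝ, (∀ i, MeasurableSet (C i)) →
        (ν {x | ∀ i, x i ∈ C i}).toReal ≤
          ∑ i, ∫ x in C i, x ∂(ν.map (fun y => y i))) ∧
      ∑ i, ∫ x, x ∂(ν.map (fun y => y i)) = 1) :=
  stmt_2_general ν hsupp
end

section
/- The uniform distribution on the main diagonal {(x,…,x) : x ∈ [0,1]} of [0,1]^n (n ≥ 2) violates the Border* inequalities: there exist measurable sets C_i ⊆ [0,1] with ∑_{i∈N} ∫_{C_i} x dν_i(x) > ν(⋃_i (C_i × [0,1]^{n-1})). -/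
open MeasureTheory

lemma diag_meas {n : ℕ} : Measurable (fun x : ℝ => fun _ : Fin n => x) :=
  measurable_pi_iff.mpr fun _ => measurable_id

/-- Corollary 1: the uniform distribution on the main diagonal of `[0,1]^n`
violates the Border* inequalities. -/
theorem stmt_3 {n : ℕ} (hn : 2 ≤ n)
    (ν : Measure (Fin n → ℝ))
    (hν : ν = Measure.map (fun x : ℝ => fun _ : Fin n => x)
      (volume.restrict (Set.Icc (0 : ℝ) 1))) :
    ∃ C : Fin n → Set ℝ, (∀ i, MeasurableSet (C i)) ∧ (∀ i, C i ⊆ Set.Icc 0 1) ∧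
      (ν {x | ∃ i, x i ∈ C i}).toReal <
        ∑ i, ∫ x in C i, x ∂(ν.map (fun y => y i)) := by
  have hne : Nonempty (Fin n) := ⟨⟨0, by omega⟩⟩
  refine ⟨fun _ => Set.Icc (1/2) 1, fun _ => measurableSet_Icc,
    fun _ => Set.Icc_subset_Icc (by norm_num) le_rfl, ?_⟩
  have hsub : Set.Icc (1/2:ℝ) 1 ∩ Set.Icc 0 1 = Set.Icc (1/2:ℝ) 1 := by
    rw [Set.inter_eq_left]
    exact Set.Icc_subset_Icc (by norm_num) le_rfl
  -- the marginals
  have hmarg : ∀ i : Fin n, ν.map (fun y => y i) = volume.restrict (Set.Icc (0:ℝ) 1) := by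
    intro i
    rw [hν, Measure.map_map (measurable_pi_apply i) diag_meas,
      show ((fun y : Fin n → ℝ => y i) ∘ fun x _ => x) = id from rfl, Measure.map_id]
  have hint : ∀ i : Fin n,
      (∫ x in Set.Icc (1/2 : ℝ) 1, x ∂(ν.map (fun y => y i))) = 3/8 := by
    intro i
    rw [hmarg i, Measure.restrict_restrict measurableSet_Icc, hsub,
      integral_Icc_eq_integral_Ioc,
      ← intervalIntegral.integral_of_le (by norm_num : (1/2:ℝ) ≤ 1),
      integral_id]
    norm_num
  have hsum : ∑ i : Fin n, (∫ x in Set.Icc (1/2 : ℝ) 1, x ∂(ν.map (fun y => y i)))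
      = n * (3/8) := by
    rw [Finset.sum_congr rfl fun i _ => hint i]
    simp [Finset.sum_const, Finset.card_fin, nsmul_eq_mul]
  -- the measure of the union event
  have hset : {x : Fin n → ℝ | ∃ i, x i ∈ Set.Icc (1/2:ℝ) 1}
      = ⋃ i : Fin n, (fun x => x i) ⁻¹' Set.Icc (1/2:ℝ) 1 := by
    ext x; simp
  have hmeas : MeasurableSet {x : Fin n → ℝ | ∃ i, x i ∈ Set.Icc (1/2:ℝ) 1} := by
    rw [hset]
    exact MeasurableSet.iUnion fun i => (measurable_pi_apply i) measurableSet_Icc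
  have hpre : (fun x : ℝ => fun _ : Fin n => x) ⁻¹'
      {x : Fin n → ℝ | ∃ i, x i ∈ Set.Icc (1/2:ℝ) 1} = Set.Icc (1/2:ℝ) 1 := by
    ext x
    simp only [Set.mem_preimage, Set.mem_setOf_eq]
    exact ⟨fun ⟨_, h⟩ => h, fun h => ⟨Classical.arbitrary _, h⟩⟩
  have hν' : ν {x : Fin n → ℝ | ∃ i, x i ∈ Set.Icc (1/2:ℝ) 1} = 1/2 := by
    rw [hν, Measure.map_apply diag_meas hmeas, hpre,
      Measure.restrict_apply measurableSet_Icc, hsub, Real.volume_Icc,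
      show (1:ℝ) - 1/2 = 1/2 by norm_num, ENNReal.ofReal_div_of_pos (by norm_num)]
    norm_num
  rw [hν', hsum]
  have : (3:ℝ)/4 ≤ n * (3/8) := by
    have : (2:ℝ) ≤ n := by exact_mod_cast hn
    nlinarith
  simp only [ENNReal.toReal_div, ENNReal.toReal_one]
  norm_num
  linarith
end

section
/- Let ν ∈ Δ([0,1]^n) be an independent product measure ν = ν_1 ⊗ ⋯ ⊗ ν_n. Then ν satisfies the Border* inequalities for all measurable testing sets C_i ⊆ [0,1] if and only if it satisfies them for all upper testing sets C_i = [a_i, 1], a_i ∈ [0,1]; i.e., ∑_{i∈N} ∫_{[a_i,1]} x_i dν_i(x_i) ≤ 1 − ∏_{i∈N} ν_i([0,a_i)) for all a = (a_1,…,a_n) ∈ [0,1]^n (together with ∑_i ∫ x_i dν_i = 1) characterizes feasibility. -/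
open MeasureTheory Set Filter Topology

section AuxSupport

variable {μ : Measure ℝ} [IsProbabilityMeasure μ]

lemma aux_compl_zero (hs : μ (Set.Icc (0:ℝ) 1) = 1) : μ (Set.Icc (0:ℝ) 1)ᶜ = 0 := by
  have := measure_compl (measurableSet_Icc (a := (0:ℝ)) (b := 1)) (measure_ne_top μ _)
  rw [hs, measure_univ] at this
  simpa using this

lemma aux_meas_inter (hs : μ (Set.Icc (0:ℝ) 1) = 1) (S : Set ℝ) :
    μ S = μ (S ∩ Set.Icc 0 1) := by
  have h1 : μ (S ∩ Set.Icc 0 1) + μ (S \ Set.Icc 0 1) = μ S :=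
    measure_inter_add_diff S measurableSet_Icc
  have h2 : μ (S \ Set.Icc 0 1) = 0 :=
    le_antisymm (le_trans (measure_mono (Set.diff_subset_compl _ _)) (aux_compl_zero hs).le)
      zero_le
  rw [← h1, h2, add_zero]

lemma aux_toReal_le_one (S : Set ℝ) : (μ S).toReal ≤ 1 := by
  have h1 := prob_le_one (μ := μ) (s := S)
  calc (μ S).toReal ≤ ((1:ENNReal)).toReal :=
        (ENNReal.toReal_le_toReal (measure_ne_top _ _) (by simp)).mpr h1
    _ = 1 := by simp

lemma aux_compl_toReal (hs : μ (Set.Icc (0:ℝ) 1) = 1) {C : Set ℝ} (hC : MeasurableSet C) :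
    (μ Cᶜ).toReal = 1 - (μ (C ∩ Set.Icc 0 1)).toReal := by
  have h := measure_compl hC (measure_ne_top μ _)
  rw [measure_univ] at h
  rw [h, aux_meas_inter hs C, ENNReal.toReal_sub_of_le (prob_le_one) (by simp)]
  simp

lemma aux_Icc_compl (hs : μ (Set.Icc (0:ℝ) 1) = 1) {a : ℝ} (ha : a ∈ Set.Icc (0:ℝ) 1) :
    μ (Set.Icc a 1)ᶜ = μ (Set.Ico 0 a) := by
  rw [aux_meas_inter hs (Set.Icc a 1)ᶜ]
  congr 1
  ext x
  simp only [Set.mem_inter_iff, Set.mem_compl_iff, Set.mem_Icc, Set.mem_Ico, not_and, not_le]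
  constructor
  · rintro ⟨h1, h2, h3⟩
    exact ⟨h2, by by_contra h; push_neg at h; linarith [h1 h]⟩
  · rintro ⟨h1, h2⟩
    exact ⟨fun h => absurd h (by linarith), h1, by linarith [ha.2]⟩

lemma aux_Ico_toReal (hs : μ (Set.Icc (0:ℝ) 1) = 1) {a : ℝ} (ha : a ∈ Set.Icc (0:ℝ) 1) :
    (μ (Set.Ico 0 a)).toReal = 1 - (μ (Set.Icc a 1)).toReal := by
  rw [← aux_Icc_compl hs ha]
  have h := measure_compl (measurableSet_Icc (a := a) (b := (1:ℝ))) (measure_ne_top μ _)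
  rw [measure_univ] at h
  rw [h, ENNReal.toReal_sub_of_le (prob_le_one) (by simp)]
  simp

lemma aux_integrable_id (hs : μ (Set.Icc (0:ℝ) 1) = 1) : Integrable (fun x : ℝ => x) μ := by
  have hae : (fun x : ℝ => x) =ᵐ[μ] (Set.Icc (0:ℝ) 1).indicator (fun x => x) := by
    filter_upwards [measure_eq_zero_iff_ae_notMem.mp (aux_compl_zero hs)] with x hx
    simp only [Set.mem_compl_iff, not_not] at hx
    rw [Set.indicator_of_mem hx]
  refine (Integrable.congr ?_ hae.symm)
  refine Integrable.mono' (integrable_const (1:ℝ)) ?_ ?_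
  · exact (measurable_id.indicator measurableSet_Icc).aestronglyMeasurable
  · filter_upwards with x
    by_cases hx : x ∈ Set.Icc (0:ℝ) 1
    · rw [Set.indicator_of_mem hx]
      rw [Real.norm_eq_abs, abs_le]
      exact ⟨by linarith [hx.1], hx.2⟩
    · rw [Set.indicator_of_notMem hx]; simp

lemma aux_setIntegral_inter (hs : μ (Set.Icc (0:ℝ) 1) = 1) (S : Set ℝ) :
    ∫ x in S, x ∂μ = ∫ x in S ∩ Set.Icc 0 1, x ∂μ := by
  refine setIntegral_congr_set ?_
  rw [Filter.eventuallyEq_set]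
  filter_upwards [measure_eq_zero_iff_ae_notMem.mp (aux_compl_zero hs)] with x hx
  simp only [Set.mem_compl_iff, not_not] at hx
  simp [hx]

lemma aux_threshold (hs : μ (Set.Icc (0:ℝ) 1) = 1) {m : ℝ} (hm0 : 0 ≤ m) (hm1 : m ≤ 1) :
    ∃ a ∈ Set.Icc (0:ℝ) 1,
      (μ (Set.Ioc a 1)).toReal ≤ m ∧ m ≤ (μ (Set.Icc a 1)).toReal := by
  set S : Set ℝ := {t | t ∈ Set.Icc (0:ℝ) 1 ∧ (μ (Set.Ioc t 1)).toReal ≤ m} with hS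
  have h1S : (1:ℝ) ∈ S := by
    constructor
    · exact ⟨zero_le_one, le_refl 1⟩
    · simp [hm0]
  have hne : S.Nonempty := ⟨1, h1S⟩
  have hbdd : BddBelow S := ⟨0, fun t ht => ht.1.1⟩
  set a := sInf S with ha
  have ha0 : 0 ≤ a := le_csInf hne (fun t ht => ht.1.1)
  have ha1 : a ≤ 1 := csInf_le hbdd h1S
  refine ⟨a, ⟨ha0, ha1⟩, ?_, ?_⟩
  · obtain ⟨u, hu_anti, hu_tend, hu_mem⟩ := exists_seq_tendsto_sInf hne hbdd
    have hua : ∀ k, a ≤ u k := fun k => csInf_le hbdd (hu_mem k)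
    have hmono : Monotone (fun k => Set.Ioc (u k) 1) := by
      intro j k hjk x hx
      exact ⟨lt_of_le_of_lt (hu_anti hjk) hx.1, hx.2⟩
    have hUnion : (⋃ k, Set.Ioc (u k) 1) = Set.Ioc a 1 := by
      ext x
      simp only [Set.mem_iUnion, Set.mem_Ioc]
      constructor
      · rintro ⟨k, h1, h2⟩; exact ⟨lt_of_le_of_lt (hua k) h1, h2⟩
      · rintro ⟨h1, h2⟩
        obtain ⟨k, hk⟩ := (hu_tend.eventually (eventually_lt_nhds h1)).exists
        exact ⟨k, hk, h2⟩
    have htend := tendsto_measure_iUnion_atTop (μ := μ) hmono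
    rw [hUnion] at htend
    have htoReal : Tendsto (fun k => (μ (Set.Ioc (u k) 1)).toReal) atTop
        (𝓝 (μ (Set.Ioc a 1)).toReal) :=
      (ENNReal.tendsto_toReal (measure_ne_top μ _)).comp htend
    exact le_of_tendsto htoReal (Eventually.of_forall (fun k => (hu_mem k).2))
  · rcases eq_or_lt_of_le ha0 with h0 | h0
    · calc m ≤ 1 := hm1
        _ = (μ (Set.Icc a 1)).toReal := by rw [← h0, hs]; simp
    · set t : ℕ → ℝ := fun k => a * (k / (k+1)) with ht
      have htlt : ∀ k, t k < a := by
        intro k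
        have : (k:ℝ) / (k+1) < 1 := by
          rw [div_lt_one (by positivity)]; linarith
        calc a * ((k:ℝ)/(k+1)) < a * 1 := by
              apply mul_lt_mul_of_pos_left this h0
          _ = a := mul_one a
      have ht0 : ∀ k, 0 ≤ t k := fun k => by positivity
      have htendt : Tendsto t atTop (𝓝 a) := by
        have : Tendsto (fun k : ℕ => (k:ℝ)/(k+1)) atTop (𝓝 1) := by
          have := tendsto_natCast_div_add_atTop (𝕜 := ℝ) 1
          simpa using this
        have := this.const_mul a
        simpa using this
      have hnotS : ∀ k, m ≤ (μ (Set.Ioc (t k) 1)).toReal := by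
        intro k
        have : t k ∉ S := fun hmem => absurd (csInf_le hbdd hmem) (not_le.mpr (htlt k))
        rw [hS] at this
        simp only [Set.mem_setOf_eq, not_and, not_le] at this
        exact (this ⟨ht0 k, le_of_lt (lt_of_lt_of_le (htlt k) ha1)⟩).le
      have hanti : Antitone (fun k => Set.Ioc (t k) 1) := by
        intro j k hjk x hx
        refine ⟨lt_of_le_of_lt ?_ hx.1, hx.2⟩
        apply mul_le_mul_of_nonneg_left _ (le_of_lt h0)
        rw [div_le_div_iff₀ (by positivity) (by positivity)]
        nlinarith [(Nat.cast_le (α := ℝ)).mpr hjk]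
      have hInter : (⋂ k, Set.Ioc (t k) 1) = Set.Icc a 1 := by
        ext x
        simp only [Set.mem_iInter, Set.mem_Ioc, Set.mem_Icc]
        constructor
        · intro h
          refine ⟨?_, (h 0).2⟩
          exact le_of_tendsto htendt (Eventually.of_forall (fun k => (h k).1.le))
        · rintro ⟨h1, h2⟩ k
          exact ⟨lt_of_lt_of_le (htlt k) h1, h2⟩
      have htend := tendsto_measure_iInter_atTop (μ := μ)
        (fun k => (measurableSet_Ioc).nullMeasurableSet) hanti ⟨0, measure_ne_top μ _⟩
      rw [hInter] at htend
      have htoReal : Tendsto (fun k => (μ (Set.Ioc (t k) 1)).toReal) atTop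
          (𝓝 (μ (Set.Icc a 1)).toReal) :=
        (ENNReal.tendsto_toReal (measure_ne_top μ _)).comp htend
      exact ge_of_tendsto htoReal (Eventually.of_forall hnotS)

lemma aux_rearrange (hs : μ (Set.Icc (0:ℝ) 1) = 1) {D : Set ℝ} (hD : MeasurableSet D)
    (hDsub : D ⊆ Set.Icc (0:ℝ) 1) {a : ℝ} (ha : a ∈ Set.Icc (0:ℝ) 1) :
    ∫ x in D, x ∂μ ≤ ∫ x in Set.Ioc a 1, x ∂μ
      + a * ((μ D).toReal - (μ (Set.Ioc a 1)).toReal) := by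
  have hint : Integrable (fun x : ℝ => x - a) μ := (aux_integrable_id hs).sub (integrable_const a)
  have hkey : ∫ x in D, (x - a) ∂μ ≤ ∫ x in Set.Ioc a 1, (x - a) ∂μ := by
    rw [← integral_indicator hD, ← integral_indicator measurableSet_Ioc]
    refine integral_mono (hint.indicator hD) (hint.indicator measurableSet_Ioc) ?_
    intro x
    by_cases hxD : x ∈ D <;> by_cases hxI : x ∈ Set.Ioc a 1
    · simp [Set.indicator_of_mem, hxD, hxI]
    · rw [Set.indicator_of_mem hxD, Set.indicator_of_notMem hxI]
      have hx1 : x ≤ 1 := (hDsub hxD).2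
      have : x ≤ a := by
        by_contra h; push_neg at h; exact hxI ⟨h, hx1⟩
      linarith
    · rw [Set.indicator_of_notMem hxD, Set.indicator_of_mem hxI]
      linarith [hxI.1]
    · simp [Set.indicator_of_notMem, hxD, hxI]
  have hexp : ∀ (S : Set ℝ), MeasurableSet S →
      ∫ x in S, (x - a) ∂μ = ∫ x in S, x ∂μ - a * (μ S).toReal := by
    intro S hSm
    rw [integral_sub (f := fun x : ℝ => x) (g := fun _ : ℝ => a)
      (aux_integrable_id hs).integrableOn
      ((integrableOn_const_iff (C := a)).mpr (Or.inr (measure_lt_top μ S))), setIntegral_const]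
    simp [mul_comm, smul_eq_mul, measureReal_def]
  rw [hexp D hD, hexp _ measurableSet_Ioc] at hkey
  linarith

end AuxSupport

lemma aux_union {n : ℕ} (νi : Fin n → Measure ℝ) [∀ i, IsProbabilityMeasure (νi i)]
    (C : Fin n → Set ℝ) (hC : ∀ i, MeasurableSet (C i)) :
    (Measure.pi νi {x | ∃ i, x i ∈ C i}).toReal = 1 - ∏ i, (νi i ((C i)ᶜ)).toReal := by
  have hset : {x : Fin n → ℝ | ∃ i, x i ∈ C i} = (Set.pi Set.univ (fun i => (C i)ᶜ))ᶜ := by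
    ext x; simp [Set.mem_pi, not_forall]
  have hmeas : MeasurableSet (Set.pi Set.univ (fun i => (C i)ᶜ)) :=
    MeasurableSet.univ_pi (fun i => (hC i).compl)
  rw [hset, measure_compl hmeas (measure_ne_top _ _), measure_univ, Measure.pi_pi]
  have hle : ∏ i, νi i ((C i)ᶜ) ≤ 1 := by
    apply le_trans (Finset.prod_le_prod' (fun i _ => measure_mono (Set.subset_univ _)))
    simp
  rw [ENNReal.toReal_sub_of_le hle (by simp), ENNReal.toReal_prod]
  simp

lemma aux_multilinear {n : ℕ} (f : (Fin n → ℝ) → ℝ)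
    (haff : ∀ (i : Fin n) (x : Fin n → ℝ) (t : ℝ), 0 ≤ t → t ≤ 1 →
      f (Function.update x i t)
        = t * f (Function.update x i 1) + (1-t) * f (Function.update x i 0))
    (hcorner : ∀ b : Fin n → Bool, 0 ≤ f (fun i => if b i then 1 else 0)) :
    ∀ x : Fin n → ℝ, (∀ i, 0 ≤ x i ∧ x i ≤ 1) → 0 ≤ f x := by
  have key : ∀ k : ℕ, ∀ x : Fin n → ℝ, (∀ i, 0 ≤ x i ∧ x i ≤ 1) →
      (∀ i : Fin n, k ≤ i.val → x i = 0 ∨ x i = 1) → 0 ≤ f x := by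
    intro k
    induction k with
    | zero =>
      intro x hx hb
      have hxb : x = fun i => if (fun j => decide (x j = 1)) i then 1 else 0 := by
        funext i
        rcases hb i (Nat.zero_le _) with h | h <;> simp [h]
      rw [hxb]
      exact hcorner _
    | succ k ih =>
      intro x hx hb
      by_cases hk : k < n
      · set i : Fin n := ⟨k, hk⟩ with hi
        have hbool : ∀ (c : ℝ), (c = 0 ∨ c = 1) → (0 ≤ c ∧ c ≤ 1) := by
          rintro c (rfl | rfl) <;> norm_num
        have hupd : ∀ (c : ℝ), (c = 0 ∨ c = 1) → 0 ≤ f (Function.update x i c) := by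
          intro c hc
          apply ih
          · intro j
            by_cases hj : j = i
            · subst hj; rw [Function.update_self]; exact hbool c hc
            · rw [Function.update_of_ne hj]; exact hx j
          · intro j hj
            by_cases hji : j = i
            · subst hji; rw [Function.update_self]; exact hc
            · rw [Function.update_of_ne hji]
              apply hb
              rcases Nat.lt_or_ge j.val (k+1) with h | h
              · exfalso
                have : j.val = k := le_antisymm (Nat.lt_succ_iff.mp h) hj
                exact hji (Fin.ext this)
              · exact h
        have := haff i x (x i) (hx i).1 (hx i).2
        rw [Function.update_eq_self] at this
        rw [this]
        have h1 := hupd 1 (Or.inr rfl)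
        have h0 := hupd 0 (Or.inl rfl)
        have := (hx i)
        nlinarith
      · apply ih x hx
        intro j hj
        exact absurd j.isLt (not_lt.mpr (le_trans (not_lt.mp hk) hj))
  intro x hx
  exact key n x hx (fun i hi => absurd i.isLt (not_lt.mpr hi))

lemma aux_fixup {n : ℕ} (E M : Fin n → ℝ) (hM0 : ∀ j, 0 ≤ M j) (hM1 : ∀ j, M j ≤ 1)
    (s : Finset (Fin n)) (heq : ∀ i ∈ s, E i = M i)
    (h : ∑ j, E j ≤ 1 - ∏ j, (1 - M j)) :
    ∑ j, (if j ∈ s then 0 else E j) ≤ 1 - ∏ j, (1 - (if j ∈ s then (0:ℝ) else M j)) := by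
  induction s using Finset.induction_on with
  | empty => simpa using h
  | @insert i s hi ih =>
    have ih' := ih (fun j hj => heq j (Finset.mem_insert_of_mem hj))
    set E' : Fin n → ℝ := fun j => if j ∈ s then 0 else E j with hE'
    set M' : Fin n → ℝ := fun j => if j ∈ s then (0:ℝ) else M j with hM'
    have hM'0 : ∀ j, 0 ≤ M' j := by
      intro j; rw [hM']; dsimp only; split
      exacts [le_refl 0, hM0 j]
    have hM'1 : ∀ j, M' j ≤ 1 := by
      intro j; rw [hM']; dsimp only; split
      exacts [zero_le_one, hM1 j]
    have hEins : (fun j => if j ∈ insert i s then 0 else E j) = Function.update E' i 0 := by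
      funext j
      by_cases hj : j = i
      · subst hj; simp [Function.update_self, hE']
      · rw [Function.update_of_ne hj, hE']
        simp [Finset.mem_insert, hj]
    have hMins : (fun j => (1:ℝ) - if j ∈ insert i s then (0:ℝ) else M j)
        = Function.update (fun j => 1 - M' j) i 1 := by
      funext j
      by_cases hj : j = i
      · subst hj; simp [Function.update_self, hM']
      · rw [Function.update_of_ne hj, hM']
        simp [Finset.mem_insert, hj]
    have hsum : ∑ j, (if j ∈ insert i s then 0 else E j)
        = ∑ j ∈ Finset.univ \ {i}, E' j := by
      rw [show ∑ j, (if j ∈ insert i s then 0 else E j) = ∑ j, Function.update E' i 0 j by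
        rw [← hEins]]
      rw [Finset.sum_update_of_mem (Finset.mem_univ i)]
      ring
    have hprod : ∏ j, ((1:ℝ) - if j ∈ insert i s then (0:ℝ) else M j)
        = ∏ j ∈ Finset.univ \ {i}, (1 - M' j) := by
      rw [show ∏ j, ((1:ℝ) - if j ∈ insert i s then (0:ℝ) else M j)
          = ∏ j, Function.update (fun j => 1 - M' j) i 1 j by rw [← hMins]]
      rw [Finset.prod_update_of_mem (Finset.mem_univ i)]
      ring
    rw [hsum, hprod]
    set P : ℝ := ∏ j ∈ Finset.univ \ {i}, (1 - M' j) with hP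
    have hP0 : 0 ≤ P := Finset.prod_nonneg (fun j _ => by linarith [hM'1 j])
    have hP1 : P ≤ 1 := Finset.prod_le_one (fun j _ => by linarith [hM'1 j])
      (fun j _ => by linarith [hM'0 j])
    have hsplit : ∑ j, E' j = E' i + ∑ j ∈ Finset.univ \ {i}, E' j := by
      rw [← Finset.sum_update_of_mem (Finset.mem_univ i) E' (E' i)]
      congr 1
      funext j
      by_cases hj : j = i
      · subst hj; rw [Function.update_self]
      · rw [Function.update_of_ne hj]
    have hprodsplit : ∏ j, (1 - M' j) = (1 - M' i) * P := by
      rw [hP, ← Finset.prod_update_of_mem (Finset.mem_univ i) (fun j => 1 - M' j) (1 - M' i)]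
      congr 1
      funext j
      by_cases hj : j = i
      · subst hj; rw [Function.update_self]
      · rw [Function.update_of_ne hj]
    rw [hprodsplit, hsplit] at ih'
    have hEMi : E' i = M' i := by
      rw [hE', hM']
      simp only [hi, if_neg]
      exact heq i (Finset.mem_insert_self i s)
    have h0i := hM'0 i
    have h1i := hM'1 i
    nlinarith

lemma aux_mixture {n : ℕ} (A B G D : Fin n → ℝ)
    (hcorner : ∀ b : Fin n → Bool,
      ∑ i, (if b i then G i else D i) ≤ 1 - ∏ i, (1 - (if b i then A i else B i)))
    (θ : Fin n → ℝ) (hθ : ∀ i, 0 ≤ θ i ∧ θ i ≤ 1) :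
    ∑ i, (θ i * G i + (1 - θ i) * D i)
      ≤ 1 - ∏ i, (1 - (θ i * A i + (1 - θ i) * B i)) := by
  classical
  set f : (Fin n → ℝ) → ℝ := fun t =>
    (1 - ∏ i, (1 - (t i * A i + (1 - t i) * B i)))
      - ∑ i, (t i * G i + (1 - t i) * D i) with hf
  have haff : ∀ (i : Fin n) (x : Fin n → ℝ) (t : ℝ), 0 ≤ t → t ≤ 1 →
      f (Function.update x i t)
        = t * f (Function.update x i 1) + (1-t) * f (Function.update x i 0) := by
    intro i x t _ _
    have hprod : ∀ (r : ℝ),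
        ∏ j, (1 - ((Function.update x i r) j * A j + (1 - (Function.update x i r) j) * B j))
          = (1 - (r * A i + (1-r) * B i))
            * ∏ j ∈ Finset.univ \ {i}, (1 - (x j * A j + (1 - x j) * B j)) := by
      intro r
      rw [show (fun j => 1 - ((Function.update x i r) j * A j
            + (1 - (Function.update x i r) j) * B j))
          = Function.update (fun j => 1 - (x j * A j + (1 - x j) * B j)) i
              (1 - (r * A i + (1-r) * B i)) from funext (fun j => by
        by_cases hj : j = i
        · subst hj; simp
        · simp [Function.update_of_ne hj])]
      exact Finset.prod_update_of_mem (Finset.mem_univ i) _ _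
    have hsum : ∀ (r : ℝ),
        ∑ j, ((Function.update x i r) j * G j + (1 - (Function.update x i r) j) * D j)
          = (r * G i + (1-r) * D i)
            + ∑ j ∈ Finset.univ \ {i}, (x j * G j + (1 - x j) * D j) := by
      intro r
      rw [show (fun j => (Function.update x i r) j * G j
            + (1 - (Function.update x i r) j) * D j)
          = Function.update (fun j => x j * G j + (1 - x j) * D j) i
              (r * G i + (1-r) * D i) from funext (fun j => by
        by_cases hj : j = i
        · subst hj; simp
        · simp [Function.update_of_ne hj])]
      exact Finset.sum_update_of_mem (Finset.mem_univ i) _ _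
    rw [hf]
    dsimp only
    rw [hprod t, hprod 1, hprod 0, hsum t, hsum 1, hsum 0]
    ring
  have hcor : ∀ b : Fin n → Bool, 0 ≤ f (fun i => if b i then 1 else 0) := by
    intro b
    rw [hf]
    dsimp only
    have h1 : ∀ i : Fin n, ((if b i then (1:ℝ) else 0) * A i
        + (1 - (if b i then (1:ℝ) else 0)) * B i) = (if b i then A i else B i) := by
      intro i; split <;> ring
    have h2 : ∀ i : Fin n, ((if b i then (1:ℝ) else 0) * G i
        + (1 - (if b i then (1:ℝ) else 0)) * D i) = (if b i then G i else D i) := by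
      intro i; split <;> ring
    have hb := hcorner b
    rw [Finset.prod_congr rfl (fun i _ => by rw [h1 i]),
      Finset.sum_congr rfl (fun i _ => by rw [h2 i])]
    linarith
  have := aux_multilinear f haff hcor θ hθ
  rw [hf] at this
  dsimp only at this
  linarith

lemma aux_corner_limit {n : ℕ} (νi : Fin n → Measure ℝ) [∀ i, IsProbabilityMeasure (νi i)]
    (hsupp : ∀ i, νi i (Set.Icc (0:ℝ) 1) = 1)
    (hup : ∀ c : Fin n → ℝ, (∀ i, c i ∈ Set.Icc (0:ℝ) 1) →
      ∑ i, ∫ x in Set.Icc (c i) 1, x ∂(νi i)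
        ≤ 1 - ∏ i, (1 - (νi i (Set.Icc (c i) 1)).toReal))
    (a : Fin n → ℝ) (ha : ∀ i, a i ∈ Set.Icc (0:ℝ) 1) (b : Fin n → Bool) :
    ∑ i, ∫ x in (if b i then Set.Icc (a i) 1 else Set.Ioc (a i) 1), x ∂(νi i)
      ≤ 1 - ∏ i, (1 - (νi i (if b i then Set.Icc (a i) 1 else Set.Ioc (a i) 1)).toReal) := by
  classical
  set c : ℕ → Fin n → ℝ := fun k i =>
    if b i then a i else min (a i + 1/(k+1)) 1 with hc
  set W : Fin n → Set ℝ := fun i =>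
    if b i then Set.Icc (a i) 1 else (if a i = 1 then Set.Icc 1 1 else Set.Ioc (a i) 1) with hW
  have hcIcc : ∀ k i, c k i ∈ Set.Icc (0:ℝ) 1 := by
    intro k i
    rw [hc]
    dsimp only
    split
    · exact ha i
    · constructor
      · apply le_min _ zero_le_one
        have := (ha i).1
        positivity
      · exact min_le_right _ _
  have hmono : ∀ i, Monotone (fun k => Set.Icc (c k i) 1) := by
    intro i j k hjk
    apply Set.Icc_subset_Icc_left
    rw [hc]; dsimp only
    split
    · exact le_refl _
    · apply min_le_min _ (le_refl 1)
      have : (1:ℝ)/(k+1) ≤ 1/(j+1) := by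
        apply div_le_div_of_nonneg_left one_pos.le (by positivity)
        push_cast; linarith [(Nat.cast_le (α := ℝ)).mpr hjk]
      linarith
  have hunion : ∀ i, (⋃ k, Set.Icc (c k i) 1) = W i := by
    intro i
    by_cases hb : b i
    · have hck : ∀ k, c k i = a i := fun k => by rw [hc]; simp [hb]
      have hWi : W i = Set.Icc (a i) 1 := by rw [hW]; simp [hb]
      simp only [hck, hWi]
      exact Set.iUnion_const _
    · have hck : ∀ k : ℕ, c k i = min (a i + 1/(k+1)) 1 := fun k => by rw [hc]; simp [hb]
      by_cases h1 : a i = 1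
      · have hck1 : ∀ k : ℕ, c k i = 1 := by
          intro k
          rw [hck k, h1]
          apply min_eq_right
          have : (0:ℝ) < 1/(k+1) := by positivity
          linarith
        have hWi : W i = Set.Icc 1 1 := by rw [hW]; simp [hb, h1]
        simp only [hck1, hWi]
        exact Set.iUnion_const _
      · have hlt : a i < 1 := lt_of_le_of_ne (ha i).2 h1
        have hWi : W i = Set.Ioc (a i) 1 := by rw [hW]; simp [hb, h1]
        rw [hWi]
        ext x
        simp only [Set.mem_iUnion, Set.mem_Icc, Set.mem_Ioc, hck]
        constructor
        · rintro ⟨k, h2, h3⟩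
          refine ⟨lt_of_lt_of_le ?_ h2, h3⟩
          apply lt_min
          · have : (0:ℝ) < 1/(k+1) := by positivity
            linarith
          · exact hlt
        · rintro ⟨h2, h3⟩
          obtain ⟨k, hk⟩ := exists_nat_one_div_lt (sub_pos.mpr h2)
          exact ⟨k, le_trans (min_le_left _ _) (by push_cast at hk ⊢; linarith), h3⟩
  have hWmeas : ∀ i, MeasurableSet (W i) := by
    intro i; rw [hW]; dsimp only
    split
    · exact measurableSet_Icc
    · split
      · exact measurableSet_Icc
      · exact measurableSet_Ioc
  have htendM : ∀ i, Tendsto (fun k => (νi i (Set.Icc (c k i) 1)).toReal) atTop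
      (𝓝 ((νi i (W i)).toReal)) := by
    intro i
    have := tendsto_measure_iUnion_atTop (μ := νi i) (hmono i)
    rw [hunion i] at this
    exact (ENNReal.tendsto_toReal (measure_ne_top _ _)).comp this
  have htendI : ∀ i, Tendsto (fun k => ∫ x in Set.Icc (c k i) 1, x ∂(νi i)) atTop
      (𝓝 (∫ x in W i, x ∂(νi i))) := by
    intro i
    have := tendsto_setIntegral_of_monotone (μ := νi i) (f := fun x => x)
      (fun k => measurableSet_Icc) (hmono i)
      ((aux_integrable_id (hsupp i)).integrableOn)
    rw [hunion i] at this
    exact this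
  have hlimit : ∑ i, ∫ x in W i, x ∂(νi i) ≤ 1 - ∏ i, (1 - (νi i (W i)).toReal) := by
    have hL : Tendsto (fun k => ∑ i, ∫ x in Set.Icc (c k i) 1, x ∂(νi i)) atTop
        (𝓝 (∑ i, ∫ x in W i, x ∂(νi i))) :=
      tendsto_finset_sum _ (fun i _ => htendI i)
    have hR : Tendsto (fun k => 1 - ∏ i, (1 - (νi i (Set.Icc (c k i) 1)).toReal)) atTop
        (𝓝 (1 - ∏ i, (1 - (νi i (W i)).toReal))) := by
      apply Tendsto.const_sub
      exact tendsto_finset_prod _ (fun i _ => Tendsto.const_sub _ (htendM i))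
    exact le_of_tendsto_of_tendsto' hL hR (fun k => hup (c k) (hcIcc k))
  set s : Finset (Fin n) := Finset.univ.filter (fun i => b i = false ∧ a i = 1) with hsdef
  have hM1 : ∀ j, (νi j (W j)).toReal ≤ 1 := fun j => aux_toReal_le_one _
  have heq : ∀ i ∈ s, (∫ x in W i, x ∂νi i) = (νi i (W i)).toReal := by
    intro i hi
    rw [hsdef, Finset.mem_filter] at hi
    obtain ⟨-, hbi, hai⟩ := hi
    have hWi : W i = {1} := by
      rw [hW]; simp [hbi, hai, Set.Icc_self]
    rw [hWi]
    rw [setIntegral_congr_fun (measurableSet_singleton (1:ℝ))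
      (fun x hx => by simpa using hx : Set.EqOn (fun x : ℝ => x) (fun _ => (1:ℝ)) {1})]
    rw [setIntegral_const]
    simp [measureReal_def]
  have hfix := aux_fixup (fun i => ∫ x in W i, x ∂νi i) (fun i => (νi i (W i)).toReal)
    (fun j => ENNReal.toReal_nonneg) hM1 s heq hlimit
  have hEU : ∀ j, (if j ∈ s then (0:ℝ) else ∫ x in W j, x ∂νi j)
      = ∫ x in (if b j then Set.Icc (a j) 1 else Set.Ioc (a j) 1), x ∂νi j := by
    intro j
    by_cases hj : j ∈ s
    · rw [if_pos hj]
      rw [hsdef, Finset.mem_filter] at hj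
      obtain ⟨-, hbj, haj⟩ := hj
      rw [if_neg (by simp [hbj]), haj, Set.Ioc_self]
      simp
    · rw [if_neg hj]
      congr 1
      rw [hW]
      by_cases hbj : b j
      · simp [hbj]
      · have haj : ¬ (a j = 1) := by
          intro hcon
          exact hj (by rw [hsdef, Finset.mem_filter]
                       exact ⟨Finset.mem_univ j, by simpa using hbj, hcon⟩)
        simp [hbj, haj]
  have hMU : ∀ j, (if j ∈ s then (0:ℝ) else (νi j (W j)).toReal)
      = (νi j (if b j then Set.Icc (a j) 1 else Set.Ioc (a j) 1)).toReal := by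
    intro j
    by_cases hj : j ∈ s
    · rw [if_pos hj]
      rw [hsdef, Finset.mem_filter] at hj
      obtain ⟨-, hbj, haj⟩ := hj
      rw [if_neg (by simp [hbj]), haj, Set.Ioc_self]
      simp
    · rw [if_neg hj]
      congr 2
      rw [hW]
      by_cases hbj : b j
      · simp [hbj]
      · have haj : ¬ (a j = 1) := by
          intro hcon
          exact hj (by rw [hsdef, Finset.mem_filter]
                       exact ⟨Finset.mem_univ j, by simpa using hbj, hcon⟩)
        simp [hbj, haj]
  calc ∑ i, ∫ x in (if b i then Set.Icc (a i) 1 else Set.Ioc (a i) 1), x ∂νi i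
      = ∑ j, (if j ∈ s then (0:ℝ) else ∫ x in W j, x ∂νi j) :=
        (Finset.sum_congr rfl (fun j _ => (hEU j).symm)).symm ▸ rfl
    _ ≤ 1 - ∏ j, (1 - (if j ∈ s then (0:ℝ) else (νi j (W j)).toReal)) := hfix
    _ = 1 - ∏ i, (1 - (νi i (if b i then Set.Icc (a i) 1 else Set.Ioc (a i) 1)).toReal) := by
        congr 1
        exact Finset.prod_congr rfl (fun j _ => by rw [hMU j])

/-- For independent posteriors, the Border* inequalities on all measurable testing
sets are equivalent to the one-parameter family of inequalities on upper contour
sets (Proposition 1(1) / Theorem 5). -/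
theorem stmt_7 {n : ℕ} (hn : 2 ≤ n)
    (νi : Fin n → Measure ℝ) [∀ i, IsProbabilityMeasure (νi i)]
    (hsupp : ∀ i, νi i (Set.Icc (0 : ℝ) 1) = 1)
    (ν : Measure (Fin n → ℝ)) (hν : ν = Measure.pi νi) :
    ((∀ C : Fin n → Set ℝ, (∀ i, MeasurableSet (C i)) →
        ∑ i, ∫ x in C i, x ∂(νi i) ≤ (ν {x | ∃ i, x i ∈ C i}).toReal) ∧
      ∑ i, ∫ x, x ∂(νi i) = 1)
    ↔
    ((∀ a : Fin n → ℝ, (∀ i, a i ∈ Set.Icc (0 : ℝ) 1) →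
        ∑ i, ∫ x in Set.Icc (a i) 1, x ∂(νi i) ≤
          1 - ∏ i, (νi i (Set.Ico 0 (a i))).toReal) ∧
      ∑ i, ∫ x, x ∂(νi i) = 1) := by
  subst hν
  constructor
  · rintro ⟨hgen, hsum⟩
    refine ⟨?_, hsum⟩
    intro a ha
    have h := hgen (fun i => Set.Icc (a i) 1) (fun i => measurableSet_Icc)
    rw [aux_union νi _ (fun i => measurableSet_Icc)] at h
    calc ∑ i, ∫ x in Set.Icc (a i) 1, x ∂(νi i)
        ≤ 1 - ∏ i, (νi i ((Set.Icc (a i) 1)ᶜ)).toReal := h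
      _ = 1 - ∏ i, (νi i (Set.Ico 0 (a i))).toReal := by
          congr 1
          exact Finset.prod_congr rfl
            (fun i _ => by rw [aux_Icc_compl (hsupp i) (ha i)])
  · rintro ⟨hup, hsum⟩
    refine ⟨?_, hsum⟩
    intro C hC
    classical
    -- reformulate the upper-set hypothesis
    have hup' : ∀ c : Fin n → ℝ, (∀ i, c i ∈ Set.Icc (0:ℝ) 1) →
        ∑ i, ∫ x in Set.Icc (c i) 1, x ∂(νi i)
          ≤ 1 - ∏ i, (1 - (νi i (Set.Icc (c i) 1)).toReal) := by
      intro c hc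
      have h := hup c hc
      calc ∑ i, ∫ x in Set.Icc (c i) 1, x ∂(νi i)
          ≤ 1 - ∏ i, (νi i (Set.Ico 0 (c i))).toReal := h
        _ = 1 - ∏ i, (1 - (νi i (Set.Icc (c i) 1)).toReal) := by
            congr 1
            exact Finset.prod_congr rfl
              (fun i _ => by rw [aux_Ico_toReal (hsupp i) (hc i)])
    set D : Fin n → Set ℝ := fun i => C i ∩ Set.Icc 0 1 with hD
    have hDmeas : ∀ i, MeasurableSet (D i) := fun i => (hC i).inter measurableSet_Icc
    have hDsub : ∀ i, D i ⊆ Set.Icc (0:ℝ) 1 := fun i => Set.inter_subset_right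
    set m : Fin n → ℝ := fun i => (νi i (D i)).toReal with hm
    have hm0 : ∀ i, 0 ≤ m i := fun i => ENNReal.toReal_nonneg
    have hm1 : ∀ i, m i ≤ 1 := fun i => aux_toReal_le_one _
    choose a haI hB hA using fun i => aux_threshold (hsupp i) (hm0 i) (hm1 i)
    set A : Fin n → ℝ := fun i => (νi i (Set.Icc (a i) 1)).toReal with hAdef
    set B : Fin n → ℝ := fun i => (νi i (Set.Ioc (a i) 1)).toReal with hBdef
    set G : Fin n → ℝ := fun i => ∫ x in Set.Icc (a i) 1, x ∂(νi i) with hGdef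
    set Di : Fin n → ℝ := fun i => ∫ x in Set.Ioc (a i) 1, x ∂(νi i) with hDidef
    have hBA : ∀ i, B i ≤ A i := by
      intro i
      rw [hAdef, hBdef]
      exact (ENNReal.toReal_le_toReal (measure_ne_top _ _) (measure_ne_top _ _)).mpr
        (measure_mono Set.Ioc_subset_Icc_self)
    set θ : Fin n → ℝ := fun i => if A i = B i then 1 else (m i - B i)/(A i - B i) with hθdef
    have hθ : ∀ i, 0 ≤ θ i ∧ θ i ≤ 1 := by
      intro i
      rw [hθdef]; dsimp only
      split
      · norm_num
      · rename_i hAB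
        have hlt : B i < A i := lt_of_le_of_ne (hBA i) (Ne.symm hAB)
        constructor
        · apply div_nonneg (by linarith [hB i]) (by linarith)
        · rw [div_le_one (by linarith)]
          linarith [hA i]
    have hmθ : ∀ i, θ i * A i + (1 - θ i) * B i = m i := by
      intro i
      rw [hθdef]; dsimp only
      split
      · rename_i hAB
        have h1 : B i ≤ m i := hB i
        have h2 : m i ≤ A i := hA i
        rw [hAB] at h2 ⊢
        linarith
      · rename_i hAB
        have hne : A i - B i ≠ 0 := fun h => hAB (by linarith [sub_eq_zero.mp h])
        field_simp
        ring
    have hθAB : ∀ i, θ i * (A i - B i) = m i - B i := by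
      intro i
      have := hmθ i
      nlinarith [hmθ i]
    -- split of the closed upper integrals at the atom
    have hsplitμ : ∀ i, A i = (νi i {a i}).toReal + B i := by
      intro i
      rw [hAdef, hBdef]
      dsimp only
      have hun : Set.Icc (a i) 1 = {a i} ∪ Set.Ioc (a i) 1 := by
        rw [← Set.Ioc_insert_left (haI i).2, Set.insert_eq]
      rw [hun, measure_union (Set.disjoint_singleton_left.mpr (by simp)) measurableSet_Ioc,
        ENNReal.toReal_add (measure_ne_top _ _) (measure_ne_top _ _)]
    have hsplitG : ∀ i, G i = a i * (νi i {a i}).toReal + Di i := by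
      intro i
      rw [hGdef, hDidef]
      dsimp only
      have hun : Set.Icc (a i) 1 = {a i} ∪ Set.Ioc (a i) 1 := by
        rw [← Set.Ioc_insert_left (haI i).2, Set.insert_eq]
      rw [hun, setIntegral_union (Set.disjoint_singleton_left.mpr (by simp)) measurableSet_Ioc
        ((aux_integrable_id (hsupp i)).integrableOn) ((aux_integrable_id (hsupp i)).integrableOn)]
      congr 1
      rw [setIntegral_congr_fun (measurableSet_singleton (a i))
        (fun x hx => by simpa using hx : Set.EqOn (fun x : ℝ => x) (fun _ => (a i)) {a i})]
      rw [setIntegral_const]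
      simp [mul_comm, measureReal_def]
    -- per-coordinate bound
    have hper : ∀ i, ∫ x in C i, x ∂(νi i) ≤ θ i * G i + (1 - θ i) * Di i := by
      intro i
      have h1 : ∫ x in C i, x ∂(νi i) = ∫ x in D i, x ∂(νi i) :=
        aux_setIntegral_inter (hsupp i) (C i)
      have h2 := aux_rearrange (hsupp i) (hDmeas i) (hDsub i) (haI i)
      have h3 : θ i * G i + (1 - θ i) * Di i = Di i + a i * (m i - B i) := by
        have hs1 := hsplitG i
        have hs2 := hsplitμ i
        have hab := hθAB i
        linear_combination (θ i) * hs1 - (a i * θ i) * hs2 + (a i) * hab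
      rw [h1, h3]
      calc ∫ x in D i, x ∂(νi i)
          ≤ ∫ x in Set.Ioc (a i) 1, x ∂(νi i)
            + a i * ((νi i (D i)).toReal - (νi i (Set.Ioc (a i) 1)).toReal) := h2
        _ = Di i + a i * (m i - B i) := by rw [hDidef, hBdef, hm]
    -- corner inequalities
    have hcorner : ∀ b : Fin n → Bool,
        ∑ i, (if b i then G i else Di i) ≤ 1 - ∏ i, (1 - (if b i then A i else B i)) := by
      intro b
      have h := aux_corner_limit νi hsupp hup' a haI b
      calc ∑ i, (if b i then G i else Di i)
          = ∑ i, ∫ x in (if b i then Set.Icc (a i) 1 else Set.Ioc (a i) 1), x ∂(νi i) := by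
            refine Finset.sum_congr rfl (fun i _ => ?_)
            by_cases hbi : b i <;> simp [hbi, hGdef, hDidef]
        _ ≤ 1 - ∏ i, (1 - (νi i (if b i then Set.Icc (a i) 1 else Set.Ioc (a i) 1)).toReal) := h
        _ = 1 - ∏ i, (1 - (if b i then A i else B i)) := by
            congr 1
            refine Finset.prod_congr rfl (fun i _ => ?_)
            by_cases hbi : b i <;> simp [hbi, hAdef, hBdef]
    have hmix := aux_mixture A B G Di hcorner θ hθ
    have hmix' : ∑ i, (θ i * G i + (1 - θ i) * Di i) ≤ 1 - ∏ i, (1 - m i) := by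
      calc ∑ i, (θ i * G i + (1 - θ i) * Di i)
          ≤ 1 - ∏ i, (1 - (θ i * A i + (1 - θ i) * B i)) := hmix
        _ = 1 - ∏ i, (1 - m i) := by
            congr 1
            exact Finset.prod_congr rfl (fun i _ => by rw [hmθ i])
    -- final combination
    have hunion : (Measure.pi νi {x | ∃ i, x i ∈ C i}).toReal = 1 - ∏ i, (1 - m i) := by
      rw [aux_union νi C hC]
      congr 1
      refine Finset.prod_congr rfl (fun i _ => ?_)
      rw [aux_compl_toReal (hsupp i) (hC i), hm]
    rw [hunion]
    calc ∑ i, ∫ x in C i, x ∂(νi i)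
        ≤ ∑ i, (θ i * G i + (1 - θ i) * Di i) := Finset.sum_le_sum (fun i _ => hper i)
      _ ≤ 1 - ∏ i, (1 - m i) := hmix'
end

section
/- Suppose ν ∈ Δ([0,1]^{n-1}) represents the beliefs of n−1 informed agents, each with identical marginal F on [0,1] having mean m = ∫_0^1 x dF(x) > 0. If ν satisfies the Border* inequalities (with an additional uninformed agent), then (n−1)·m ≤ 1; consequently for fixed F with m > 0, ν is infeasible whenever n − 1 > 1/m. -/
open MeasureTheory

/-- Propositions 2 and 3(1): with `k` informed agents whose common marginal has
mean `m > 0`, the Border* inequalities force `k·m ≤ 1`, so the beliefs are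
infeasible as soon as `k > 1/m`. -/
theorem stmt_9 {k : ℕ} (hk : 1 ≤ k)
    (ν : Measure (Fin k → ℝ)) [IsProbabilityMeasure ν]
    (hsupp : ν {x | ∀ i, x i ∈ Set.Icc (0 : ℝ) 1} = 1)
    (F : Measure ℝ) [IsProbabilityMeasure F]
    (hmarg : ∀ i, ν.map (fun x => x i) = F)
    (m : ℝ) (hm : m = ∫ x, x ∂F) (hmpos : 0 < m)
    (hBorder : ∀ C : Fin k → Set ℝ, (∀ i, MeasurableSet (C i)) →
      ∑ i, ∫ x in C i, x ∂(ν.map (fun y => y i)) ≤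
        (ν {x | ∃ i, x i ∈ C i}).toReal) :
    (k : ℝ) * m ≤ 1 ∧ ¬ (1 / m < (k : ℝ)) := by
  have hB := hBorder (fun _ => Set.univ) (fun _ => MeasurableSet.univ)
  have hset : {x : Fin k → ℝ | ∃ i, x i ∈ (Set.univ : Set ℝ)} = Set.univ := by
    ext x
    simp only [Set.mem_setOf_eq, Set.mem_univ, iff_true]
    exact ⟨⟨0, Nat.lt_of_lt_of_le Nat.zero_lt_one hk⟩, trivial⟩
  rw [hset] at hB
  simp only [Measure.restrict_univ, measure_univ, ENNReal.toReal_one] at hB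
  have hsum : ∑ i : Fin k, ∫ x, x ∂(ν.map (fun y => y i)) = (k : ℝ) * m := by
    rw [Finset.sum_congr rfl (fun i _ => by rw [hmarg i, ← hm])]
    simp [Finset.sum_const, nsmul_eq_mul]
  rw [hsum] at hB
  refine ⟨hB, fun h => ?_⟩
  have : (1 : ℝ) < (k : ℝ) * m := by
    rw [div_lt_iff₀ hmpos] at h; linarith
  linarith
end

section
/- Let ν be the uniform distribution on the upper triangle Δ* = {(x_1,x_2) ∈ [0,1]² : x_1 + x_2 ≥ 1}, with density 2 on Δ*. Its marginals have density f(x) = 2x on [0,1], and the symmetric Border* condition 2∫_a^1 2x² dx ≤ 1 − (1/2)(2a−1)²·1_{a ≥ 1/2} fails for some a ∈ (1/2, 0.66]; hence ν is not feasible. -/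
open MeasureTheory

lemma slice_vol (A : Set ℝ) (x : ℝ) :
    volume {y : ℝ | x ∈ A ∧ (x ∈ Set.Icc (0:ℝ) 1 ∧ y ∈ Set.Icc (0:ℝ) 1 ∧ 1 ≤ x + y)} =
    (A ∩ Set.Icc 0 1).indicator (fun t => ENNReal.ofReal t) x := by
  by_cases hx : x ∈ A ∩ Set.Icc (0:ℝ) 1
  · have hset : {y : ℝ | x ∈ A ∧ (x ∈ Set.Icc (0:ℝ) 1 ∧ y ∈ Set.Icc (0:ℝ) 1 ∧ 1 ≤ x + y)}
        = Set.Icc (1 - x) 1 := by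
      ext y
      obtain ⟨hA, hI⟩ := hx
      obtain ⟨hx0, hx1⟩ := hI
      simp only [Set.mem_setOf_eq, Set.mem_Icc]
      constructor
      · rintro ⟨-, -, ⟨hy0, hy1⟩, hsum⟩; exact ⟨by linarith, hy1⟩
      · rintro ⟨h1, h2⟩
        exact ⟨hA, ⟨hx0, hx1⟩, ⟨by linarith, h2⟩, by linarith⟩
    rw [hset, Real.volume_Icc, Set.indicator_of_mem hx]
    ring_nf
  · have hset : {y : ℝ | x ∈ A ∧ (x ∈ Set.Icc (0:ℝ) 1 ∧ y ∈ Set.Icc (0:ℝ) 1 ∧ 1 ≤ x + y)}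
        = (∅ : Set ℝ) := by
      ext y
      simp only [Set.mem_setOf_eq, Set.mem_empty_iff_false, iff_false]
      rintro ⟨hA, hI, -⟩
      exact hx ⟨hA, hI⟩
    rw [hset, Set.indicator_of_notMem hx]
    simp

/-- Proposition 5: the uniform distribution on the upper triangle
`Δ* = {(x₁,x₂) ∈ [0,1]² : x₁ + x₂ ≥ 1}` has marginal density `2x` and violates
the symmetric Border* condition for some `a ∈ (1/2, 0.66]`. -/
theorem stmt_16 (ν : Measure (ℝ × ℝ))
    (hν : ν = (2 : ENNReal) • volume.restrict
      {p : ℝ × ℝ | p.1 ∈ Set.Icc (0 : ℝ) 1 ∧ p.2 ∈ Set.Icc (0 : ℝ) 1 ∧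
        1 ≤ p.1 + p.2}) :
    ν.map Prod.fst =
      (volume.restrict (Set.Icc (0 : ℝ) 1)).withDensity
        (fun x => ENNReal.ofReal (2 * x)) ∧
    ν.map Prod.snd =
      (volume.restrict (Set.Icc (0 : ℝ) 1)).withDensity
        (fun x => ENNReal.ofReal (2 * x)) ∧
    ∃ a ∈ Set.Ioc (1 / 2 : ℝ) 0.66,
      1 - (1 / 2) * (2 * a - 1) ^ 2 < 2 * ∫ x in Set.Icc a 1, 2 * x ^ 2 := by
  set S : Set (ℝ × ℝ) := {p : ℝ × ℝ | p.1 ∈ Set.Icc (0 : ℝ) 1 ∧ p.2 ∈ Set.Icc (0 : ℝ) 1 ∧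
        1 ≤ p.1 + p.2} with hSdef
  have hS : MeasurableSet S := by
    apply MeasurableSet.inter
    · exact measurable_fst measurableSet_Icc
    apply MeasurableSet.inter
    · exact measurable_snd measurableSet_Icc
    · exact measurableSet_le measurable_const (measurable_fst.add measurable_snd)
  have key : ∀ (A : Set ℝ), MeasurableSet A →
      (2 : ENNReal) * ∫⁻ x, ((A ∩ Set.Icc 0 1).indicator (fun t => ENNReal.ofReal t) x) =
      ((volume.restrict (Set.Icc (0 : ℝ) 1)).withDensity
        (fun x => ENNReal.ofReal (2 * x))) A := by
    intro A hA
    rw [withDensity_apply _ hA, Measure.restrict_restrict hA,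
      lintegral_indicator (hA.inter measurableSet_Icc), ← lintegral_const_mul]
    · apply setLIntegral_congr_fun (hA.inter measurableSet_Icc)
      intro x hx
      beta_reduce
      rw [ENNReal.ofReal_mul (by norm_num)]
      norm_num
    · exact measurable_id.ennreal_ofReal
  refine ⟨?_, ?_, ?_⟩
  · ext A hA
    rw [hν, Measure.map_apply measurable_fst hA, Measure.smul_apply, smul_eq_mul,
      Measure.restrict_apply (hA.preimage measurable_fst), MeasureTheory.Measure.volume_eq_prod,
      Measure.prod_apply ((hA.preimage measurable_fst).inter hS), ← key A hA]
    congr 1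
    apply lintegral_congr
    intro x
    rw [← slice_vol A x]
    rfl
  · ext A hA
    rw [hν, Measure.map_apply measurable_snd hA, Measure.smul_apply, smul_eq_mul,
      Measure.restrict_apply (hA.preimage measurable_snd), MeasureTheory.Measure.volume_eq_prod,
      Measure.prod_apply_symm ((hA.preimage measurable_snd).inter hS), ← key A hA]
    congr 1
    apply lintegral_congr
    intro y
    rw [← slice_vol A y]
    congr 1
    ext x
    simp only [Set.mem_setOf_eq, Set.mem_preimage, Set.mem_inter_iff, S]
    constructor <;> (rintro ⟨h1, h2, h3, h4⟩; exact ⟨h1, h3, h2, by linarith⟩)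
  · refine ⟨0.66, by norm_num, ?_⟩
    have h1 : ∫ x in Set.Icc (0.66:ℝ) 1, 2 * x ^ 2 = ∫ x in (0.66:ℝ)..1, 2 * x ^ 2 := by
      rw [intervalIntegral.integral_of_le (by norm_num), integral_Icc_eq_integral_Ioc]
    have h2 : ∫ x in (0.66:ℝ)..1, 2 * x ^ 2 = 2 * (((1:ℝ)^3 - 0.66^3)/3) := by
      rw [intervalIntegral.integral_const_mul, integral_pow]
      norm_num
    rw [h1, h2]
    norm_num
end

section
/- Let μ be uniform on [0,1]² (two bidders with independent uniform priors). For auction a allocating always to bidder 1, the induced posterior distribution is the Dirac measure δ_{(1,0)}; for the efficient auction b (allocate to the higher type), the interim outcomes are Q_i^b(t_i) = t_i and the posterior distribution is uniform on [0,1]² (CDF x_1 x_2); for the half–half randomization c, the interim outcomes are Q_1^c(t_1) = 1/2 + t_1/2 and Q_2^c(t_2) = t_2/2, and the induced posterior distribution is uniform on [1/2,1] × [0,1/2], which is not equal to any convex combination λ δ_{(1,0)} + (1−λ)·Unif([0,1]²) for λ ∈ [0,1]. -/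
open MeasureTheory

lemma vol_map_div : volume.map (fun x : ℝ => x / 2) = (2 : ENNReal) • volume := by
  have h : (fun x : ℝ => x / 2) = (· * (1/2 : ℝ)) := by funext x; ring
  rw [h, Real.map_volume_mul_right (by norm_num : (1/2:ℝ) ≠ 0)]
  norm_num

lemma vol_map_half : volume.map (fun x : ℝ => 1/2 + x / 2) = (2 : ENNReal) • volume := by
  have h : (fun x : ℝ => 1/2 + x/2) = (fun y : ℝ => 1/2 + y) ∘ (fun x : ℝ => x / 2) := rfl
  rw [h, ← Measure.map_map (measurable_const_add _) (by fun_prop), vol_map_div,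
    Measure.map_smul, map_add_left_eq_self]

lemma m1 : (volume.restrict (Set.Icc (0:ℝ) 1)).map (fun x : ℝ => 1/2 + x/2)
    = (2 : ENNReal) • volume.restrict (Set.Icc (1/2 : ℝ) 1) := by
  have hpre : (fun x : ℝ => 1/2 + x/2) ⁻¹' Set.Icc (1/2 : ℝ) 1 = Set.Icc 0 1 := by
    ext x
    simp only [Set.mem_preimage, Set.mem_Icc]
    constructor <;> rintro ⟨h1, h2⟩ <;> constructor <;> linarith
  calc (volume.restrict (Set.Icc (0:ℝ) 1)).map (fun x : ℝ => 1/2 + x/2)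
      = (volume.restrict ((fun x : ℝ => 1/2 + x/2) ⁻¹' Set.Icc (1/2:ℝ) 1)).map
          (fun x : ℝ => 1/2 + x/2) := by rw [hpre]
    _ = (volume.map (fun x : ℝ => 1/2 + x/2)).restrict (Set.Icc (1/2:ℝ) 1) :=
        (Measure.restrict_map (by fun_prop) measurableSet_Icc).symm
    _ = (2 : ENNReal) • volume.restrict (Set.Icc (1/2:ℝ) 1) := by
        rw [vol_map_half, Measure.restrict_smul]

lemma m2 : (volume.restrict (Set.Icc (0:ℝ) 1)).map (fun x : ℝ => x/2)
    = (2 : ENNReal) • volume.restrict (Set.Icc (0 : ℝ) (1/2)) := by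
  have hpre : (fun x : ℝ => x/2) ⁻¹' Set.Icc (0 : ℝ) (1/2) = Set.Icc 0 1 := by
    ext x
    simp only [Set.mem_preimage, Set.mem_Icc]
    constructor <;> rintro ⟨h1, h2⟩ <;> constructor <;> linarith
  calc (volume.restrict (Set.Icc (0:ℝ) 1)).map (fun x : ℝ => x/2)
      = (volume.restrict ((fun x : ℝ => x/2) ⁻¹' Set.Icc (0:ℝ) (1/2))).map
          (fun x : ℝ => x/2) := by rw [hpre]
    _ = (volume.map (fun x : ℝ => x/2)).restrict (Set.Icc (0:ℝ) (1/2)) :=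
        (Measure.restrict_map (by fun_prop) measurableSet_Icc).symm
    _ = (2 : ENNReal) • volume.restrict (Set.Icc (0:ℝ) (1/2)) := by
        rw [vol_map_div, Measure.restrict_smul]

/-- Example 1: with two bidders with independent uniform priors, the auction `a`
(always allocate to bidder 1) induces posteriors `δ_{(1,0)}`, the efficient
auction `b` induces the uniform distribution on `[0,1]²`, and their half–half
randomization `c` has interim outcomes `Q₁ᶜ(t₁) = 1/2 + t₁/2`, `Q₂ᶜ(t₂) = t₂/2`
and induces the uniform distribution on `[1/2,1] × [0,1/2]`, which is not a
convex combination of the former two posterior distributions. -/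
theorem stmt_19 (μ : Measure (ℝ × ℝ))
    (hμ : μ = (volume.restrict (Set.Icc (0 : ℝ) 1)).prod
      (volume.restrict (Set.Icc (0 : ℝ) 1))) :
    -- auction a : always allocate to bidder 1
    μ.map (fun _ : ℝ × ℝ => ((1 : ℝ), (0 : ℝ))) = Measure.dirac ((1 : ℝ), (0 : ℝ)) ∧
    -- auction b : interim outcomes `Q_i^b(t_i) = P(t_j ≤ t_i) = t_i` ...
    (∀ t ∈ Set.Icc (0 : ℝ) 1,
      (volume.restrict (Set.Icc (0 : ℝ) 1)) (Set.Iic t) = ENNReal.ofReal t) ∧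
    μ.map (fun t : ℝ × ℝ => (t.1, t.2)) = μ ∧
    -- auction c : uniform on `[1/2,1] × [0,1/2]`
    μ.map (fun t : ℝ × ℝ => (1 / 2 + t.1 / 2, t.2 / 2)) =
      ((2 : ENNReal) • volume.restrict (Set.Icc (1 / 2 : ℝ) 1)).prod
        ((2 : ENNReal) • volume.restrict (Set.Icc (0 : ℝ) (1 / 2))) ∧
    -- the posteriors of `c` are not a convex combination of those of `a` and `b`
    (∀ l ∈ Set.Icc (0 : ℝ) 1,
      μ.map (fun t : ℝ × ℝ => (1 / 2 + t.1 / 2, t.2 / 2)) ≠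
        ENNReal.ofReal l • Measure.dirac ((1 : ℝ), (0 : ℝ)) +
          ENNReal.ofReal (1 - l) • μ) := by
  have hν : IsProbabilityMeasure (volume.restrict (Set.Icc (0:ℝ) 1)) := ⟨by simp⟩
  have hμp : IsProbabilityMeasure μ := by rw [hμ]; infer_instance
  have part4 : μ.map (fun t : ℝ × ℝ => (1 / 2 + t.1 / 2, t.2 / 2)) =
      ((2 : ENNReal) • volume.restrict (Set.Icc (1 / 2 : ℝ) 1)).prod
        ((2 : ENNReal) • volume.restrict (Set.Icc (0 : ℝ) (1 / 2))) := by
    rw [hμ, show (fun t : ℝ × ℝ => (1 / 2 + t.1 / 2, t.2 / 2)) =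
      Prod.map (fun x : ℝ => 1/2 + x/2) (fun x : ℝ => x/2) from rfl,
      ← Measure.map_prod_map _ _ (by fun_prop) (by fun_prop), m1, m2]
  refine ⟨?_, ?_, ?_, part4, ?_⟩
  · rw [Measure.map_const, measure_univ, one_smul]
  · intro t ht
    rw [Measure.restrict_apply measurableSet_Iic]
    have : Set.Iic t ∩ Set.Icc (0:ℝ) 1 = Set.Icc 0 t := by
      ext x
      simp only [Set.mem_inter_iff, Set.mem_Iic, Set.mem_Icc]
      constructor
      · rintro ⟨h1, h2, h3⟩; exact ⟨h2, h1⟩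
      · rintro ⟨h1, h2⟩; exact ⟨h2, h1, h2.trans ht.2⟩
    rw [this, Real.volume_Icc, sub_zero]
  · rw [show (fun t : ℝ × ℝ => (t.1, t.2)) = id from rfl, Measure.map_id]
  · intro l hl heq
    rw [part4] at heq
    -- evaluate at the singleton {(1,0)}
    have H := Measure.ext_iff.mp heq
    have h1 := H {((1:ℝ), (0:ℝ))} (measurableSet_singleton _)
    have hz : ∀ (c d x : ℝ), ((2:ENNReal) • volume.restrict (Set.Icc c d)) {x} = 0 := by
      intro c d x
      simp [Measure.smul_apply, Measure.restrict_apply (measurableSet_singleton x),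
        measure_mono_null Set.inter_subset_left Real.volume_singleton]
    have hνz : ∀ x : ℝ, (volume.restrict (Set.Icc (0:ℝ) 1)) {x} = 0 := by
      intro x
      simp [Measure.restrict_apply (measurableSet_singleton x),
        measure_mono_null Set.inter_subset_left Real.volume_singleton]
    have hμz : μ {((1:ℝ), (0:ℝ))} = 0 := by
      rw [hμ, ← Set.singleton_prod_singleton, Measure.prod_prod, hνz, zero_mul]
    rw [← Set.singleton_prod_singleton, Measure.prod_prod, hz] at h1
    simp only [Measure.coe_add, Measure.coe_smul, Pi.add_apply, Pi.smul_apply,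
      Measure.dirac_apply' _ (measurableSet_singleton _), Set.singleton_prod_singleton,
      hμz, zero_mul, mul_zero, smul_eq_mul, add_zero] at h1
    have hind : ({((1:ℝ), (0:ℝ))} : Set (ℝ × ℝ)).indicator (1 : (ℝ × ℝ) → ENNReal)
        ((1:ℝ), (0:ℝ)) = 1 := by simp
    rw [hind, mul_one] at h1
    have hl0 : l = 0 := le_antisymm (by simpa [ENNReal.ofReal_eq_zero] using h1.symm) hl.1
    subst hl0
    -- evaluate at the rectangle
    have h2 := Measure.ext_iff.mp heq (Set.Icc (1/2:ℝ) 1 ×ˢ Set.Icc (0:ℝ) (1/2))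
      (measurableSet_Icc.prod measurableSet_Icc)
    have hrect : ∀ (c d : ℝ), c ≤ d → (0:ℝ) ≤ c → d ≤ 1 →
        (volume.restrict (Set.Icc (0:ℝ) 1)) (Set.Icc c d) = ENNReal.ofReal (d - c) := by
      intro c d hcd h0 h1'
      rw [Measure.restrict_apply measurableSet_Icc]
      have : Set.Icc c d ∩ Set.Icc (0:ℝ) 1 = Set.Icc c d := by
        rw [Set.inter_eq_left]
        intro x hx
        exact ⟨h0.trans hx.1, hx.2.trans h1'⟩
      rw [this, Real.volume_Icc]
    simp only [Measure.prod_prod, Measure.coe_add, Measure.coe_smul, Pi.add_apply,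
      Pi.smul_apply, smul_eq_mul] at h2
    rw [hμ] at h2
    rw [Measure.prod_prod] at h2
    have hself : ∀ c d : ℝ, (volume.restrict (Set.Icc c d)) (Set.Icc c d)
        = ENNReal.ofReal (d - c) := by
      intro c d
      rw [Measure.restrict_apply measurableSet_Icc, Set.inter_self, Real.volume_Icc]
    rw [hself, hself, hrect (1/2) 1 (by norm_num) (by norm_num) le_rfl,
      hrect 0 (1/2) (by norm_num) le_rfl (by norm_num)] at h2
    simp only [ENNReal.ofReal_zero, zero_mul, zero_add, sub_zero, ENNReal.ofReal_one,
      one_mul] at h2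
    rw [show (1:ℝ) - 1/2 = 1/2 by norm_num,
      show (2:ENNReal) = ENNReal.ofReal 2 from (ENNReal.ofReal_ofNat 2).symm,
      ← ENNReal.ofReal_mul (by norm_num), ← ENNReal.ofReal_mul (by norm_num),
      ← ENNReal.ofReal_mul (by norm_num)] at h2
    rw [ENNReal.ofReal_eq_ofReal_iff (by norm_num) (by norm_num)] at h2
    norm_num at h2
end
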